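/- Let μ be the measure dμ = w dA on a measure space, where w : X → [0,∞) is a measurable weight. Suppose Q ⊆ X is measurable with 0 < |Q| < ∞ (Lebesgue/reference measure), and there is a constant C ≥ 1 with (∫_Q w dA)·(∫_Q w⁻¹ dA) ≤ C·|Q|² (the A₂ condition on Q, with w > 0 a.e. on Q). If E ⊆ Q is measurable with |E| ≤ δ·|Q| for some 0 < δ < 1, then μ(E) ≤ (1 - (1-δ)²/C)·μ(Q). -/

import Mathlib

open MeasureTheory

/-
On F = Q \ E we have |F| ≥ (1 - δ)|Q|, and Cauchy–Schwarz gives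
|F|² ≤ μ(F) ∫_F w⁻¹ ≤ μ(F) ∫_Q w⁻¹. Multiplying by μ(Q) and using the A₂ bound yields
(|F|/|Q|)² μ(Q) ≤ C μ(F), hence (1 - δ)² μ(Q) ≤ C (μ(Q) - μ(E)).
-/

section CauchySchwarz

variable {X : Type*} [MeasurableSpace X] {μ : Measure X} {w : X → ℝ}

/- Cauchy–Schwarz for `√w` and `1/√w`, via the discriminant of the nonnegative quadratic
`s ↦ ∫ (s w - 1)² / w = s² ∫ w - 2 s μ(X) + ∫ w⁻¹`. -/
theorem measureReal_univ_sq_le_integral_mul_integral_inv [IsFiniteMeasure μ]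
    (hpos : ∀ᵐ x ∂μ, 0 < w x) (hw : Integrable w μ)
    (hwinv : Integrable (fun x => (w x)⁻¹) μ) :
    μ.real Set.univ ^ 2 ≤ (∫ x, w x ∂μ) * ∫ x, (w x)⁻¹ ∂μ := by
  have hquadratic : ∀ s : ℝ, 0 ≤ (∫ x, w x ∂μ) * (s * s) + (-2 * μ.real Set.univ) * s
      + ∫ x, (w x)⁻¹ ∂μ := by
    intro s
    have hnonneg : 0 ≤ ∫ x, (s ^ 2 * w x - 2 * s + (w x)⁻¹) ∂μ := by
      refine integral_nonneg_of_ae ?_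
      filter_upwards [hpos] with x hx
      have hsq : s ^ 2 * w x - 2 * s + (w x)⁻¹ = (s * w x - 1) ^ 2 * (w x)⁻¹ := by
        field_simp
        ring
      rw [Pi.zero_apply, hsq]
      positivity
    have hexpand : ∫ x, (s ^ 2 * w x - 2 * s + (w x)⁻¹) ∂μ
        = (∫ x, w x ∂μ) * (s * s) + (-2 * μ.real Set.univ) * s + ∫ x, (w x)⁻¹ ∂μ := by
      rw [integral_add (f := fun x => s ^ 2 * w x - 2 * s) ((hw.const_mul _).sub
        (integrable_const _)) hwinv, integral_sub (hw.const_mul _) (integrable_const _),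
        integral_const_mul, integral_const, smul_eq_mul]
      ring
    rwa [hexpand] at hnonneg
  have hdiscrim := discrim_le_zero hquadratic
  rw [discrim] at hdiscrim
  nlinarith

end CauchySchwarz

section A2

variable {X : Type*} [MeasurableSpace X] {A : Measure X} {w : X → ℝ} {Q F : Set X} {C : ℝ}

theorem measureReal_sq_mul_setIntegral_le_of_A2 (hFQ : F ⊆ Q) (hQfin : A Q ≠ ⊤)
    (hwpos : ∀ᵐ x ∂(A.restrict Q), 0 < w x) (hwint : IntegrableOn w Q A)
    (hwinv : IntegrableOn (fun x => (w x)⁻¹) Q A)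
    (hA2 : (∫ x in Q, w x ∂A) * (∫ x in Q, (w x)⁻¹ ∂A) ≤ C * A.real Q ^ 2) :
    A.real F ^ 2 * ∫ x in Q, w x ∂A ≤ C * A.real Q ^ 2 * ∫ x in F, w x ∂A := by
  have hwposF : ∀ᵐ x ∂(A.restrict F), 0 < w x := ae_restrict_of_ae_restrict_of_subset hFQ hwpos
  have : IsFiniteMeasure (A.restrict F) :=
    isFiniteMeasure_restrict.2 (measure_ne_top_of_subset hFQ hQfin)
  have hIQ : 0 ≤ ∫ x in Q, w x ∂A :=
    setIntegral_nonneg_of_ae_restrict (hwpos.mono fun x hx => hx.le)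
  have hIF : 0 ≤ ∫ x in F, w x ∂A :=
    setIntegral_nonneg_of_ae_restrict (hwposF.mono fun x hx => hx.le)
  have hJ : ∫ x in F, (w x)⁻¹ ∂A ≤ ∫ x in Q, (w x)⁻¹ ∂A :=
    setIntegral_mono_set hwinv (hwpos.mono fun x hx => (inv_pos.2 hx).le)
      (Filter.Eventually.of_forall hFQ)
  have hCS : A.real F ^ 2 ≤ (∫ x in F, w x ∂A) * ∫ x in Q, (w x)⁻¹ ∂A := by
    calc A.real F ^ 2 ≤ (∫ x in F, w x ∂A) * ∫ x in F, (w x)⁻¹ ∂A := by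
          simpa using measureReal_univ_sq_le_integral_mul_integral_inv hwposF
            (hwint.mono_set hFQ) (hwinv.mono_set hFQ)
      _ ≤ (∫ x in F, w x ∂A) * ∫ x in Q, (w x)⁻¹ ∂A := by gcongr
  calc A.real F ^ 2 * ∫ x in Q, w x ∂A
      ≤ (∫ x in F, w x ∂A) * (∫ x in Q, (w x)⁻¹ ∂A) * ∫ x in Q, w x ∂A := by gcongr
    _ = (∫ x in F, w x ∂A) * ((∫ x in Q, w x ∂A) * ∫ x in Q, (w x)⁻¹ ∂A) := by ring
    _ ≤ (∫ x in F, w x ∂A) * (C * A.real Q ^ 2) := by gcongr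
    _ = C * A.real Q ^ 2 * ∫ x in F, w x ∂A := by ring

end A2

theorem stmt_5_general {X : Type*} [MeasurableSpace X] (A : Measure X) (w : X → ℝ)
    (Q E : Set X) (C δ : ℝ)
    (hEm : MeasurableSet E) (hEQ : E ⊆ Q)
    (hQpos : 0 < A Q) (hQfin : A Q < ⊤)
    (hwpos : ∀ᵐ x ∂(A.restrict Q), 0 < w x)
    (hwint : IntegrableOn w Q A)
    (hwinv : IntegrableOn (fun x => (w x)⁻¹) Q A)
    (hC : 1 ≤ C)
    (hA2 : (∫ x in Q, w x ∂A) * (∫ x in Q, (w x)⁻¹ ∂A) ≤ C * (A Q).toReal ^ 2)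
    (hδ1 : δ < 1)
    (hE : (A E).toReal ≤ δ * (A Q).toReal) :
    (∫ x in E, w x ∂A) ≤ (1 - (1 - δ) ^ 2 / C) * ∫ x in Q, w x ∂A := by
  have hQ : 0 < A.real Q := ENNReal.toReal_pos hQpos.ne' hQfin.ne
  have hF : (1 - δ) * A.real Q ≤ A.real (Q \ E) := by
    have := le_measureReal_sdiff (μ := A) (s₁ := Q) (measure_ne_top_of_subset hEQ hQfin.ne)
    change A.real E ≤ δ * A.real Q at hE
    linarith
  have hIQ : 0 ≤ ∫ x in Q, w x ∂A :=
    setIntegral_nonneg_of_ae_restrict (hwpos.mono fun x hx => hx.le)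
  have hcomplement := measureReal_sq_mul_setIntegral_le_of_A2 (F := Q \ E) Set.sdiff_subset
    hQfin.ne hwpos hwint hwinv hA2
  rw [setIntegral_sdiff hEm hwint hEQ] at hcomplement
  have hscaled : (1 - δ) ^ 2 * ∫ x in Q, w x ∂A
      ≤ C * ((∫ x in Q, w x ∂A) - ∫ x in E, w x ∂A) := by
    refine le_of_mul_le_mul_right ?_ (pow_pos hQ 2)
    calc (1 - δ) ^ 2 * (∫ x in Q, w x ∂A) * A.real Q ^ 2
        = ((1 - δ) * A.real Q) ^ 2 * ∫ x in Q, w x ∂A := by ring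
      _ ≤ A.real (Q \ E) ^ 2 * ∫ x in Q, w x ∂A := by
        have : 0 ≤ 1 - δ := by linarith
        gcongr
      _ ≤ C * ((∫ x in Q, w x ∂A) - ∫ x in E, w x ∂A) * A.real Q ^ 2 := by linarith
  rw [sub_mul, one_mul, div_mul_eq_mul_div, le_sub_iff_add_le, ← le_sub_iff_add_le',
    div_le_iff₀ (by linarith)]
  linarith

/-- If `w` is a weight satisfying the `A₂` condition on `Q` with constant `C`, and `E ⊆ Q`
with `|E| ≤ δ|Q|` for some `0 < δ < 1`, then `μ(E) ≤ (1 - (1-δ)²/C) μ(Q)` where `dμ = w dA`. -/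
theorem stmt_5 {X : Type*} [MeasurableSpace X] (A : Measure X) (w : X → ℝ)
    (Q E : Set X) (C δ : ℝ)
    (hQm : MeasurableSet Q) (hEm : MeasurableSet E) (hEQ : E ⊆ Q)
    (hQpos : 0 < A Q) (hQfin : A Q < ⊤)
    (hwpos : ∀ᵐ x ∂(A.restrict Q), 0 < w x)
    (hwint : IntegrableOn w Q A)
    (hwinv : IntegrableOn (fun x => (w x)⁻¹) Q A)
    (hC : 1 ≤ C)
    (hA2 : (∫ x in Q, w x ∂A) * (∫ x in Q, (w x)⁻¹ ∂A) ≤ C * (A Q).toReal ^ 2)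
    (hδ0 : 0 < δ) (hδ1 : δ < 1)
    (hE : (A E).toReal ≤ δ * (A Q).toReal) :
    (∫ x in E, w x ∂A) ≤ (1 - (1 - δ) ^ 2 / C) * ∫ x in Q, w x ∂A :=
  stmt_5_general A w Q E C δ hEm hEQ hQpos hQfin hwpos hwint hwinv hC hA2 hδ1 hE
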